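/- arXiv:2108.04538 — 2 statements merged into one kernel-verified Lean document; each statement's English description precedes it below -/
import Mathlib

section
/- Let Γ be a subgroup of SU(d,1) and n a positive integer. There exists a multiplier system of weight 1/n on Γ if and only if the restriction of σ to Γ splits modulo n, i.e. if and only if there exists a function κ : Γ → ℚ such that σ(g,h) − (κ(gh) − κ(g) − κ(h)) ∈ nℤ for all g,h ∈ Γ. -/
open Matrix Complex
open scoped ComplexOrder

noncomputable section

/-- `SLC n` is the special linear group of `n × n` complex matrices. -/
abbrev SLC (n : ℕ) := Matrix.SpecialLinearGroup (Fin n) ℂ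

/-- The standard Hermitian matrix of signature `(d,1)` used to define `SU(d,1)`:
`J_{1,d+1} = J_{d+1,1} = 1`, `J_{i,i} = 1` for `2 ≤ i ≤ d` (1-indexed), and `0` otherwise. -/
def Jmat (d : ℕ) : Matrix (Fin (d+1)) (Fin (d+1)) ℂ :=
  Matrix.of fun i j =>
    if (i = 0 ∧ j = Fin.last d) ∨ (i = Fin.last d ∧ j = 0) then 1
    else if i = j ∧ i ≠ 0 ∧ i ≠ Fin.last d then 1 else 0

/-- `SU(d,1)`, realised as the subgroup of `SL_{d+1}(ℂ)` preserving the Hermitian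
form given by `Jmat d`. -/
def SUd1 (d : ℕ) : Subgroup (SLC (d+1)) where
  carrier := {g | (↑g : Matrix (Fin (d+1)) (Fin (d+1)) ℂ)ᴴ * Jmat d * ↑g = Jmat d}
  one_mem' := by simp
  mul_mem' := by
    intro a b ha hb
    simp only [Set.mem_setOf_eq] at ha hb ⊢
    rw [Matrix.SpecialLinearGroup.coe_mul, Matrix.conjTranspose_mul]
    calc (↑b)ᴴ * (↑a)ᴴ * Jmat d * ((↑a : Matrix (Fin (d+1)) (Fin (d+1)) ℂ) * ↑b)
        = (↑b)ᴴ * ((↑a : Matrix (Fin (d+1)) (Fin (d+1)) ℂ)ᴴ * Jmat d * ↑a) * ↑b := by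
          simp only [Matrix.mul_assoc]
      _ = Jmat d := by rw [ha]; exact hb
  inv_mem' := by
    intro a ha
    simp only [Set.mem_setOf_eq] at ha ⊢
    set A : Matrix (Fin (d+1)) (Fin (d+1)) ℂ := ↑a with hA
    set B : Matrix (Fin (d+1)) (Fin (d+1)) ℂ := ↑(a⁻¹) with hB
    have h1 : A * B = 1 := by
      rw [hA, hB, ← Matrix.SpecialLinearGroup.coe_mul, mul_inv_cancel]
      simp
    calc Bᴴ * Jmat d * B
        = Bᴴ * (Aᴴ * Jmat d * A) * B := by rw [ha]
      _ = (A * B)ᴴ * Jmat d * (A * B) := by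
          rw [Matrix.conjTranspose_mul]; simp only [Matrix.mul_assoc]
      _ = Jmat d := by rw [h1]; simp

/-- The Hermitian form `⟨v,w⟩ = conj(v)ᵀ J w` on `ℂ^{d+1}`. -/
def Hform (d : ℕ) (v w : Fin (d+1) → ℂ) : ℂ := star v ⬝ᵥ (Jmat d *ᵥ w)

/-- The symmetric space `ℋ = {τ ∈ ℂ^d : ⟨(τ;1),(τ;1)⟩ < 0}`. -/
def Hdom (d : ℕ) : Set (Fin d → ℂ) :=
  {τ | Hform d (Fin.snoc τ 1) (Fin.snoc τ 1) < 0}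

/-- The automorphy factor `j(g,τ) = Cτ + D`. -/
def jfun (d : ℕ) (g : Matrix (Fin (d+1)) (Fin (d+1)) ℂ) (τ : Fin d → ℂ) : ℂ :=
  (g *ᵥ Fin.snoc τ 1) (Fin.last d)

/-- The action `g*τ = (Cτ+D)⁻¹ (Aτ+B)` of `SU(d,1)` on `ℋ`. -/
def actH (d : ℕ) (g : Matrix (Fin (d+1)) (Fin (d+1)) ℂ) (τ : Fin d → ℂ) : Fin d → ℂ :=
  fun k => (g *ᵥ Fin.snoc τ 1) (Fin.castSucc k) / jfun d g τ

open scoped Classical in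
/-- `X(g) = -g_{d+1,1}` if `g_{d+1,1} ≠ 0`, and `g_{d+1,d+1}` otherwise. -/
def Xfun (d : ℕ) (g : Matrix (Fin (d+1)) (Fin (d+1)) ℂ) : ℂ :=
  if g (Fin.last d) 0 = 0 then g (Fin.last d) (Fin.last d) else -(g (Fin.last d) 0)

/-- The branch `j̃(g,τ) = Log(j(g,τ)/X(g)) + Log(X(g))` of the logarithm of `j(g,τ)`,
where `Log` is the principal branch (imaginary part in `(-π, π]`). -/
def jtilde (d : ℕ) (g : Matrix (Fin (d+1)) (Fin (d+1)) ℂ) (τ : Fin d → ℂ) : ℂ :=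
  Complex.log (jfun d g τ / Xfun d g) + Complex.log (Xfun d g)

/-- A base point of `ℋ` (for `d ≥ 1`). -/
def baseTau (d : ℕ) : Fin d → ℂ := fun i => if (i : ℕ) = 0 then -1 else 0

/-- The 2-cocycle `σ(g,h) = (1/(2πi))(j̃(gh,τ) − j̃(g,h*τ) − j̃(h,τ))`, evaluated at the
base point of `ℋ` (as proved in the paper, the value is an integer and does not depend
on the choice of `τ ∈ ℋ`). -/
def sigmaC (d : ℕ) (g h : Matrix (Fin (d+1)) (Fin (d+1)) ℂ) : ℂ :=
  (jtilde d (g * h) (baseTau d) - jtilde d g (actH d h (baseTau d)) - jtilde d h (baseTau d)) /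
    (2 * Real.pi * Complex.I)

/-- The integer-valued 2-cocycle `σ` on `SU(d,1)` classifying its universal cover. -/
def sigmaZ (d : ℕ) (g h : Matrix (Fin (d+1)) (Fin (d+1)) ℂ) : ℤ := round (sigmaC d g h).re

/-- A fractional-weight multiplier system of weight `n'/m` on a subgroup (given by its
underlying set `S`) of `SU(d,1)`: a nowhere-vanishing function `ℓ` on `S × ℋ` satisfying
the multiplier identity, whose `m`-th power is a character times `j(g,τ)^{n'}`, and which
is continuous (hence holomorphic) in `τ` on `ℋ`. -/
def IsMultiplierSystem (d : ℕ) (S : Set (SLC (d+1))) (n' m : ℕ)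
    (ℓ : SLC (d+1) → (Fin d → ℂ) → ℂ) : Prop :=
  (∀ g ∈ S, ∀ τ ∈ Hdom d, ℓ g τ ≠ 0) ∧
  (∀ g ∈ S, ∀ h ∈ S, ∀ τ ∈ Hdom d,
    ℓ (g * h) τ = ℓ g (actH d (↑h) τ) * ℓ h τ) ∧
  (∃ χ : SLC (d+1) → ℂ, (∀ g ∈ S, ∀ h ∈ S, χ (g * h) = χ g * χ h) ∧
      ∀ g ∈ S, ∀ τ ∈ Hdom d, ℓ g τ ^ m = χ g * jfun d (↑g) τ ^ n') ∧
  (∀ g ∈ S, ContinuousOn (ℓ g) (Hdom d))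

/-!
For `g ∈ SU(d,1)` the last row of `g` is isotropic for the form, and this forces
`Re (j(g,τ) / X(g)) > 0` on `ℋ`. Hence `j̃(g,·)` is a continuous logarithm of `j(g,·)` on the convex
set `ℋ`, and the defect `j̃(gh,τ) − j̃(g,h*τ) − j̃(h,τ)`, being continuous with values in `2πiℤ`,
equals `2πi σ(g,h)` for every `τ`.

A multiplier system `ℓ` of weight `1/n` differs from `exp (j̃/n)` by a continuous function whose
`n`-th power is constant in `τ`, hence by a constant `w(g)`. The multiplier identity becomes
`w(g) w(h) = w(gh) exp (2πi σ(g,h)/n)`, so `θ = −n arg w / 2π` splits `σ` modulo `n` with real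
values, and a `ℚ`-linear retraction `ℝ → ℚ` turns this into a rational splitting. Conversely, a
splitting `κ` gives the multiplier system `exp ((j̃ − 2πi κ)/n)`.
-/

open Finset ComplexConjugate

lemma normSq_convex_comb {a b : ℝ} (ha : 0 ≤ a) (hb : 0 ≤ b) (hab : a + b = 1) (z w : ℂ) :
    normSq (a • z + b • w) ≤ a * normSq z + b * normSq w := by
  simp only [Complex.real_smul, normSq_apply, Complex.add_re, Complex.add_im,
    Complex.mul_re, Complex.mul_im, Complex.ofReal_re, Complex.ofReal_im]
  nlinarith [sq_nonneg (z.re - w.re), sq_nonneg (z.im - w.im), mul_nonneg ha hb]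

lemma IsPreconnected.eq_of_pow_eq_const {X : Type*} [TopologicalSpace X] {S : Set X}
    (hS : IsPreconnected S) {f : X → ℂ} (hf : ContinuousOn f S) {n : ℕ} (hn : 0 < n) {c : ℂ}
    (hpow : ∀ x ∈ S, f x ^ n = c) {x y : X} (hx : x ∈ S) (hy : y ∈ S) : f x = f y :=
  hS.constant_of_mapsTo (Polynomial.nthRoots n c).toFinset.finite_toSet.isDiscrete hf
    (fun x hx => by simpa [Polynomial.mem_nthRoots hn] using hpow x hx) hx hy

section CocycleSplitting

variable {G : Type*} [Mul G] {σ : G → G → ℤ} {n : ℕ}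

lemma exists_real_splitting_of_mul_eq (hn : 0 < n) {w : G → ℂ} (hw0 : ∀ g, w g ≠ 0)
    (hw : ∀ g h, w g * w h = w (g * h) * exp (σ g h * (2 * Real.pi * I) / n)) :
    ∃ θ : G → ℝ, ∀ g h, ∃ t : ℤ, θ (g * h) - θ g - θ h = σ g h + n * t := by
  refine ⟨fun g => -(n * arg (w g)) / (2 * Real.pi), fun g h => ?_⟩
  have hexp : exp (log (w g) + log (w h))
      = exp (log (w (g * h)) + σ g h * (2 * Real.pi * I) / n) := by
    rw [exp_add, exp_add, exp_log (hw0 g), exp_log (hw0 h), exp_log (hw0 _), hw]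
  obtain ⟨k, hk⟩ := exp_eq_exp_iff_exists_int.mp hexp
  rw [add_assoc, show (σ g h : ℂ) * (2 * Real.pi * I) / n + k * (2 * Real.pi * I)
    = ((2 * Real.pi * (σ g h / n + k) : ℝ) : ℂ) * I by push_cast; ring] at hk
  have him := congrArg Complex.im hk
  simp only [add_im, log_im, mul_I_im, ofReal_re] at him
  refine ⟨k, ?_⟩
  have hn' : (n : ℝ) ≠ 0 := by positivity
  field_simp at him ⊢
  linear_combination him

lemma exists_rat_splitting_of_real {θ : G → ℝ}
    (hθ : ∀ g h, ∃ t : ℤ, θ (g * h) - θ g - θ h = σ g h + n * t) :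
    ∃ κ : G → ℚ, ∀ g h, ∃ t : ℤ, (σ g h : ℚ) - (κ (g * h) - κ g - κ h) = n * t := by
  obtain ⟨f, hf⟩ := (Algebra.linearMap ℚ ℝ).exists_leftInverse_of_injective
    (LinearMap.ker_eq_bot.mpr (algebraMap ℚ ℝ).injective)
  refine ⟨fun g => f (θ g), fun g h => ?_⟩
  obtain ⟨t, ht⟩ := hθ g h
  have hf' : f (θ (g * h) - θ g - θ h) = σ g h + n * t := by
    rw [ht]
    simpa using LinearMap.congr_fun hf (σ g h + n * t : ℚ)
  refine ⟨-t, ?_⟩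
  rw [map_sub, map_sub] at hf'
  push_cast
  linear_combination -hf'

end CocycleSplitting

variable {d : ℕ}

lemma Jmat_eq_toMatrix_swap :
    Jmat d = (Equiv.swap 0 (Fin.last d)).toPEquiv.toMatrix := by
  ext i j
  simp only [PEquiv.toMatrix_apply, Equiv.toPEquiv_apply, Option.mem_def, Option.some_inj, Jmat,
    Matrix.of_apply, Equiv.swap_apply_def]
  by_cases hi0 : i = 0 <;> by_cases hil : i = Fin.last d <;> simp_all [eq_comm]
  subst hi0
  simp [Fin.fin_one_eq_zero j]

lemma Jmat_mulVec (v : Fin (d+1) → ℂ) : Jmat d *ᵥ v = v ∘ Equiv.swap 0 (Fin.last d) := by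
  rw [Jmat_eq_toMatrix_swap, PEquiv.toMatrix_toPEquiv_mulVec]

lemma Jmat_mul_Jmat : Jmat d * Jmat d = 1 := by
  rw [Jmat_eq_toMatrix_swap, ← PEquiv.toMatrix_trans, ← Equiv.toPEquiv_trans,
    Equiv.swap_swap, Equiv.toPEquiv_refl, PEquiv.toMatrix_refl]

lemma Jmat_last_last [NeZero d] : Jmat d (Fin.last d) (Fin.last d) = 0 := by
  simp [Jmat, NeZero.ne d]

lemma swap_castSucc_of_ne_zero [NeZero d] {k : Fin d} (hk : k ≠ 0) :
    Equiv.swap 0 (Fin.last d) k.castSucc = k.castSucc :=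
  Equiv.swap_apply_of_ne_of_ne (Fin.castSucc_ne_zero_iff.mpr hk)
    (Fin.castSucc_lt_last k).ne

lemma Hform_self [NeZero d] (v : Fin (d+1) → ℂ) :
    Hform d v v = ((2 * (conj (v 0) * v (Fin.last d)).re
      + ∑ k ∈ univ.erase (0 : Fin d), normSq (v k.castSucc) : ℝ) : ℂ) := by
  have hcross : conj (v 0) * v (Fin.last d) + conj (v (Fin.last d)) * v 0
      = ((2 * (conj (v 0) * v (Fin.last d)).re : ℝ) : ℂ) := by
    rw [← Complex.add_conj]; simp [mul_comm]
  rw [Hform, Jmat_mulVec, dotProduct, Fin.sum_univ_castSucc,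
    ← add_sum_erase _ _ (mem_univ (0 : Fin d))]
  simp only [Pi.star_apply, Function.comp_apply, Fin.castSucc_zero, Equiv.swap_apply_left,
    Equiv.swap_apply_right, Complex.star_def]
  rw [sum_congr rfl fun k hk => by rw [swap_castSucc_of_ne_zero (ne_of_mem_erase hk)]]
  push_cast at hcross ⊢
  simp only [Complex.normSq_eq_conj_mul_self]
  linear_combination hcross

lemma mem_Hdom_iff [NeZero d] {τ : Fin d → ℂ} :
    τ ∈ Hdom d ↔ 2 * (τ 0).re + ∑ k ∈ univ.erase (0 : Fin d), normSq (τ k) < 0 := by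
  rw [Hdom, Set.mem_ofPred_eq, Hform_self, ← Fin.castSucc_zero, ← Complex.ofReal_zero,
    Complex.real_lt_real]
  simp

lemma convex_Hdom [NeZero d] : Convex ℝ (Hdom d) := by
  intro τ hτ τ' hτ' a b ha hb hab
  rw [mem_Hdom_iff] at hτ hτ' ⊢
  have hsum : ∑ k ∈ univ.erase (0 : Fin d), normSq ((a • τ + b • τ') k)
      ≤ a * ∑ k ∈ univ.erase (0 : Fin d), normSq (τ k)
        + b * ∑ k ∈ univ.erase (0 : Fin d), normSq (τ' k) := by
    rw [mul_sum, mul_sum, ← sum_add_distrib]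
    exact sum_le_sum fun k _ => normSq_convex_comb ha hb hab (τ k) (τ' k)
  have hre : ((a • τ + b • τ') 0).re = a * (τ 0).re + b * (τ' 0).re := by simp
  have hcomb : a * _ + b * _ < 0 := convex_Iio (0 : ℝ) hτ hτ' ha hb hab
  linarith

lemma baseTau_mem_Hdom [NeZero d] : baseTau d ∈ Hdom d := by
  rw [mem_Hdom_iff, sum_eq_zero fun k hk => by
    simp [baseTau, Fin.val_ne_zero_iff.mpr (ne_of_mem_erase hk)]]
  simp [baseTau]

lemma re_mul_conj_neg_of_isotropic [NeZero d] {c τ : Fin d → ℂ} {D : ℂ}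
    (hc : 2 * (c 0 * conj D).re + ∑ k ∈ univ.erase (0 : Fin d), normSq (c k) = 0)
    (hτ : 2 * (τ 0).re + ∑ k ∈ univ.erase (0 : Fin d), normSq (τ k) < 0) (h0 : c 0 ≠ 0) :
    ((∑ k, c k * τ k + D) * conj (c 0)).re < 0 := by
  -- `2 Re (x ȳ) ≤ |x|² + |y|²` with `x = τₖ c̄₀`, `y = c̄ₖ`; after summing, `hc` absorbs the
  -- `c`-terms and what remains is `|c₀|²` times the defining function of `ℋ` at `τ`.
  have hterm : ∀ k,
      2 * (c k * τ k * conj (c 0)).re ≤ normSq (c 0) * normSq (τ k) + normSq (c k) := fun k => by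
    have := Complex.normSq_nonneg (τ k * conj (c 0) - conj (c k))
    rw [Complex.normSq_sub] at this
    simp only [Complex.normSq_conj, map_mul, Complex.conj_conj] at this
    have e : (τ k * conj (c 0) * c k).re = (c k * τ k * conj (c 0)).re := by ring_nf
    nlinarith
  have h0re : (c 0 * τ 0 * conj (c 0)).re = normSq (c 0) * (τ 0).re := by
    rw [mul_right_comm, Complex.mul_conj, Complex.re_ofReal_mul]
  have hDre : (D * conj (c 0)).re = (c 0 * conj D).re := by
    rw [← Complex.conj_re, map_mul, Complex.conj_conj, mul_comm]
  have hsum : 2 * ∑ k ∈ univ.erase (0 : Fin d), (c k * τ k * conj (c 0)).re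
      ≤ normSq (c 0) * ∑ k ∈ univ.erase (0 : Fin d), normSq (τ k)
        + ∑ k ∈ univ.erase (0 : Fin d), normSq (c k) := by
    rw [mul_sum, mul_sum, ← sum_add_distrib]
    exact sum_le_sum fun k _ => hterm k
  rw [add_mul, sum_mul, Complex.add_re, Complex.re_sum, ← add_sum_erase _ _ (mem_univ 0), h0re,
    hDre]
  nlinarith [Complex.normSq_pos.mpr h0]

lemma mulVec_snoc_one_apply (A : Matrix (Fin (d+1)) (Fin (d+1)) ℂ) (τ : Fin d → ℂ)
    (i : Fin (d+1)) : (A *ᵥ Fin.snoc τ 1) i = ∑ k, A i k.castSucc * τ k + A i (Fin.last d) := by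
  simp [Matrix.mulVec, dotProduct, Fin.sum_univ_castSucc]

lemma continuous_mulVec_snoc_one_apply (A : Matrix (Fin (d+1)) (Fin (d+1)) ℂ) (i : Fin (d+1)) :
    Continuous fun τ : Fin d → ℂ => (A *ᵥ Fin.snoc τ 1) i := by
  simp_rw [mulVec_snoc_one_apply]
  fun_prop

lemma mem_SUd1_iff {g : SLC (d+1)} :
    g ∈ SUd1 d ↔ (g : Matrix (Fin (d+1)) (Fin (d+1)) ℂ)ᴴ * Jmat d * g = Jmat d :=
  Iff.rfl

section SU

variable {M : Matrix (Fin (d+1)) (Fin (d+1)) ℂ}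

lemma mul_Jmat_conjTranspose_Jmat (hM : Mᴴ * Jmat d * M = Jmat d) :
    M * (Jmat d * Mᴴ * Jmat d) = 1 :=
  mul_eq_one_comm.mpr <| by
    calc Jmat d * Mᴴ * Jmat d * M = Jmat d * (Mᴴ * Jmat d * M) := by simp only [Matrix.mul_assoc]
      _ = 1 := by rw [hM, Jmat_mul_Jmat]

lemma mul_Jmat_mul_conjTranspose (hM : Mᴴ * Jmat d * M = Jmat d) : M * Jmat d * Mᴴ = Jmat d := by
  calc M * Jmat d * Mᴴ = M * (Jmat d * Mᴴ * Jmat d) * Jmat d := by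
        simp only [Matrix.mul_assoc, Jmat_mul_Jmat, Matrix.mul_one]
    _ = Jmat d := by rw [mul_Jmat_conjTranspose_Jmat hM, Matrix.one_mul]

lemma lastRow_ne_zero (hM : Mᴴ * Jmat d * M = Jmat d) : M (Fin.last d) ≠ 0 := by
  intro h
  have := congrFun (congrFun (mul_Jmat_conjTranspose_Jmat hM) (Fin.last d)) (Fin.last d)
  simp [Matrix.mul_apply, h] at this

lemma lastRow_isotropic [NeZero d] (hM : Mᴴ * Jmat d * M = Jmat d) :
    2 * (M (Fin.last d) 0 * conj (M (Fin.last d) (Fin.last d))).re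
      + ∑ k ∈ univ.erase (0 : Fin d), normSq (M (Fin.last d) k.castSucc) = 0 := by
  have h := congrFun (congrFun (mul_Jmat_mul_conjTranspose hM) (Fin.last d)) (Fin.last d)
  have hform : (M * Jmat d * Mᴴ) (Fin.last d) (Fin.last d)
      = Hform d (star (M (Fin.last d))) (star (M (Fin.last d))) := by
    simp only [Hform, star_star, Matrix.mul_apply, dotProduct, Matrix.mulVec,
      Matrix.conjTranspose_apply, Pi.star_apply, Finset.mul_sum, Finset.sum_mul]
    rw [Finset.sum_comm]
    exact sum_congr rfl fun i _ => sum_congr rfl fun j _ => by ring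
  rw [hform, Hform_self, Jmat_last_last, Complex.ofReal_eq_zero] at h
  simpa only [Pi.star_apply, Complex.star_def, Complex.conj_conj, Complex.normSq_conj] using h

lemma re_jfun_div_Xfun_pos [NeZero d] (hM : Mᴴ * Jmat d * M = Jmat d) {τ : Fin d → ℂ}
    (hτ : τ ∈ Hdom d) : 0 < (jfun d M τ / Xfun d M).re := by
  have hrow := lastRow_isotropic hM
  rw [jfun, mulVec_snoc_one_apply, Xfun]
  split_ifs with h0
  · -- the last row is `(0, …, 0, D)`, so `j = X = D`
    have hc : ∀ k : Fin d, M (Fin.last d) k.castSucc = 0 := by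
      rw [h0, zero_mul, Complex.zero_re, mul_zero, zero_add,
        sum_eq_zero_iff_of_nonneg fun k _ => Complex.normSq_nonneg _] at hrow
      intro k
      rcases eq_or_ne k 0 with rfl | hk
      · rwa [Fin.castSucc_zero]
      · exact Complex.normSq_eq_zero.mp (hrow k (mem_erase.mpr ⟨hk, mem_univ k⟩))
    have hD : M (Fin.last d) (Fin.last d) ≠ 0 := fun hD =>
      lastRow_ne_zero hM (funext fun j => Fin.lastCases hD hc j)
    simp [hc, hD]
  · have hneg := re_mul_conj_neg_of_isotropic (c := fun k => M (Fin.last d) k.castSucc)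
      (D := M (Fin.last d) (Fin.last d)) (by simpa only [Fin.castSucc_zero] using hrow)
      (mem_Hdom_iff.mp hτ) (by simpa only [Fin.castSucc_zero] using h0)
    simp only [Fin.castSucc_zero] at hneg
    have hdiv : ∀ z w : ℂ, w ≠ 0 → z / -w = -(z * conj w) / (normSq w : ℂ) := fun z w hw => by
      have : conj w ≠ 0 := (map_ne_zero _).mpr hw
      rw [Complex.normSq_eq_conj_mul_self]
      field_simp
    rw [hdiv _ _ h0, Complex.div_ofReal_re, Complex.neg_re]
    exact div_pos (neg_pos.mpr hneg) (Complex.normSq_pos.mpr h0)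

lemma conjTranspose_mul_Jmat_mul_mul {N : Matrix (Fin (d+1)) (Fin (d+1)) ℂ}
    (hM : Mᴴ * Jmat d * M = Jmat d) (hN : Nᴴ * Jmat d * N = Jmat d) :
    (M * N)ᴴ * Jmat d * (M * N) = Jmat d := by
  calc (M * N)ᴴ * Jmat d * (M * N) = Nᴴ * (Mᴴ * Jmat d * M) * N := by
        simp only [Matrix.conjTranspose_mul, Matrix.mul_assoc]
    _ = Jmat d := by rw [hM, hN]

lemma Hform_mulVec (hM : Mᴴ * Jmat d * M = Jmat d) (v : Fin (d+1) → ℂ) :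
    Hform d (M *ᵥ v) (M *ᵥ v) = Hform d v v := by
  rw [Hform, Hform, Matrix.star_mulVec, ← Matrix.dotProduct_mulVec, Matrix.mulVec_mulVec,
    Matrix.mulVec_mulVec, hM]

end SU

section Automorphy

variable [NeZero d] {M N : Matrix (Fin (d+1)) (Fin (d+1)) ℂ}

lemma Xfun_ne_zero (hM : Mᴴ * Jmat d * M = Jmat d) : Xfun d M ≠ 0 := fun h => by
  simpa [h] using re_jfun_div_Xfun_pos hM (baseTau_mem_Hdom (d := d))

lemma jfun_ne_zero (hM : Mᴴ * Jmat d * M = Jmat d) {τ : Fin d → ℂ} (hτ : τ ∈ Hdom d) :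
    jfun d M τ ≠ 0 := fun h => by
  simpa [h] using re_jfun_div_Xfun_pos hM hτ

lemma exp_jtilde (hM : Mᴴ * Jmat d * M = Jmat d) {τ : Fin d → ℂ} (hτ : τ ∈ Hdom d) :
    exp (jtilde d M τ) = jfun d M τ := by
  have hX := Xfun_ne_zero hM
  rw [jtilde, exp_add, exp_log (div_ne_zero (jfun_ne_zero hM hτ) hX), exp_log hX,
    div_mul_cancel₀ _ hX]

lemma continuousOn_jtilde (hM : Mᴴ * Jmat d * M = Jmat d) :
    ContinuousOn (jtilde d M) (Hdom d) := fun _ hτ =>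
  (((continuous_mulVec_snoc_one_apply M _).continuousAt.div_const _).clog
    (Complex.mem_slitPlane_iff.mpr (.inl (re_jfun_div_Xfun_pos hM hτ)))).add
    continuousAt_const |>.continuousWithinAt

lemma continuousOn_actH (hN : Nᴴ * Jmat d * N = Jmat d) : ContinuousOn (actH d N) (Hdom d) :=
  continuousOn_pi.mpr fun _ _ hτ =>
    ((continuous_mulVec_snoc_one_apply N _).continuousAt.div
      (continuous_mulVec_snoc_one_apply N _).continuousAt (jfun_ne_zero hN hτ)).continuousWithinAt

lemma mulVec_snoc_one_eq_jfun_smul (hN : Nᴴ * Jmat d * N = Jmat d) {τ : Fin d → ℂ}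
    (hτ : τ ∈ Hdom d) : N *ᵥ Fin.snoc τ 1 = jfun d N τ • Fin.snoc (actH d N τ) 1 := by
  funext i
  refine Fin.lastCases ?_ (fun k => ?_) i
  · simp [jfun]
  · simp [actH, mul_div_cancel₀ _ (jfun_ne_zero hN hτ)]

lemma actH_mem_Hdom (hN : Nᴴ * Jmat d * N = Jmat d) {τ : Fin d → ℂ} (hτ : τ ∈ Hdom d) :
    actH d N τ ∈ Hdom d := by
  have hform := Hform_mulVec hN (Fin.snoc τ 1)
  rw [mulVec_snoc_one_eq_jfun_smul hN hτ, Hform, star_smul, Matrix.mulVec_smul, dotProduct_smul,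
    smul_dotProduct, smul_smul, ← Hform, smul_eq_mul, Complex.star_def, Complex.mul_conj] at hform
  rw [Hdom, Set.mem_ofPred_eq, ← hform, Hform_self, ← Complex.ofReal_mul, ← Complex.ofReal_zero,
    Complex.real_lt_real] at hτ
  rw [Hdom, Set.mem_ofPred_eq, Hform_self, ← Complex.ofReal_zero, Complex.real_lt_real]
  exact neg_of_mul_neg_right hτ (Complex.normSq_nonneg _)

lemma jfun_mul (hN : Nᴴ * Jmat d * N = Jmat d) {τ : Fin d → ℂ} (hτ : τ ∈ Hdom d) :
    jfun d (M * N) τ = jfun d M (actH d N τ) * jfun d N τ := by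
  rw [jfun, ← Matrix.mulVec_mulVec, mulVec_snoc_one_eq_jfun_smul hN hτ, Matrix.mulVec_smul,
    Pi.smul_apply, smul_eq_mul, mul_comm]
  rfl

lemma jtilde_mul_sub_eq_sigmaZ (hM : Mᴴ * Jmat d * M = Jmat d) (hN : Nᴴ * Jmat d * N = Jmat d)
    {τ : Fin d → ℂ} (hτ : τ ∈ Hdom d) :
    jtilde d (M * N) τ - jtilde d M (actH d N τ) - jtilde d N τ
      = sigmaZ d M N * (2 * Real.pi * I) := by
  set F : (Fin d → ℂ) → ℂ := fun τ => jtilde d (M * N) τ - jtilde d M (actH d N τ) - jtilde d N τ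
  have hMN := conjTranspose_mul_Jmat_mul_mul hM hN
  have hint : ∀ τ ∈ Hdom d, ∃ m : ℤ, F τ = m * (2 * Real.pi * I) := fun τ hτ => by
    have hτ' := actH_mem_Hdom hN hτ
    refine exp_eq_one_iff.mp ?_
    rw [exp_sub, exp_sub, exp_jtilde hMN hτ, exp_jtilde hM hτ', exp_jtilde hN hτ, jfun_mul hN hτ,
      div_div, div_self (mul_ne_zero (jfun_ne_zero hM hτ') (jfun_ne_zero hN hτ))]
  have hcont : ContinuousOn (fun τ => (F τ / (2 * Real.pi * I)).re) (Hdom d) :=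
    continuous_re.comp_continuousOn <| ((continuousOn_jtilde hMN).sub
      ((continuousOn_jtilde hM).comp (continuousOn_actH hN) fun _ => actH_mem_Hdom hN)).sub
      (continuousOn_jtilde hN) |>.div_const _
  have hmaps : Set.MapsTo (fun τ => (F τ / (2 * Real.pi * I)).re) (Hdom d)
      (Set.range ((↑) : ℤ → ℝ)) := fun τ hτ => by
    obtain ⟨m, hm⟩ := hint τ hτ
    exact ⟨m, by simp [hm]⟩
  obtain ⟨m, hm⟩ := hint τ hτ
  obtain ⟨m₀, hm₀⟩ := hint _ (baseTau_mem_Hdom (d := d))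
  have hconst := convex_Hdom.isPreconnected.constant_of_mapsTo
    Int.isClosedEmbedding_coe_real.isInducing.isDiscrete_range hcont hmaps hτ baseTau_mem_Hdom
  simp only [hm, hm₀, mul_div_cancel_right₀ _ two_pi_I_ne_zero, intCast_re, Int.cast_inj] at hconst
  have hσ : sigmaZ d M N = m₀ := by
    rw [sigmaZ, sigmaC, show jtilde d (M * N) (baseTau d) - _ - _ = F (baseTau d) from rfl, hm₀,
      mul_div_cancel_right₀ _ two_pi_I_ne_zero]
    simp
  rw [show _ - _ - _ = F τ from rfl, hm, hσ, hconst]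

end Automorphy

section MultiplierSystem

variable [NeZero d] {S : Set (SLC (d+1))} {n : ℕ}

lemma exists_eq_mul_exp_jtilde_div (hS : S ⊆ SUd1 d) (hn : 0 < n)
    {ℓ : SLC (d+1) → (Fin d → ℂ) → ℂ} (hℓ : IsMultiplierSystem d S 1 n ℓ) :
    ∃ w : SLC (d+1) → ℂ, ∀ g ∈ S, w g ≠ 0 ∧ ∀ τ ∈ Hdom d, ℓ g τ = w g * exp (jtilde d g τ / n) := by
  obtain ⟨hne, -, ⟨χ, -, hχ⟩, hcont⟩ := hℓ
  have hbase : baseTau d ∈ Hdom d := baseTau_mem_Hdom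
  refine ⟨fun g => ℓ g (baseTau d) / exp (jtilde d g (baseTau d) / n), fun g hg =>
    ⟨div_ne_zero (hne g hg _ hbase) (exp_ne_zero _), fun τ hτ => ?_⟩⟩
  have hM := mem_SUd1_iff.mp (hS hg)
  have hpow : ∀ τ ∈ Hdom d, (ℓ g τ / exp (jtilde d g τ / n)) ^ n = χ g := fun τ hτ => by
    rw [div_pow, ← exp_nat_mul, mul_div_cancel₀ _ (Nat.cast_ne_zero.mpr hn.ne'),
      exp_jtilde hM hτ, hχ g hg τ hτ, pow_one, mul_div_cancel_right₀ _ (jfun_ne_zero hM hτ)]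
  have hconst := convex_Hdom.isPreconnected.eq_of_pow_eq_const
    (f := fun τ => ℓ g τ / exp (jtilde d g τ / n))
    ((hcont g hg).div ((continuousOn_jtilde hM).div_const _).cexp fun _ _ => exp_ne_zero _)
    hn hpow hτ hbase
  change ℓ g τ = ℓ g (baseTau d) / exp (jtilde d g (baseTau d) / n) * exp (jtilde d g τ / n)
  rw [← hconst, div_mul_cancel₀ _ (exp_ne_zero _)]

lemma mul_eq_mul_exp_sigmaZ (hS : S ⊆ SUd1 d) {ℓ : SLC (d+1) → (Fin d → ℂ) → ℂ}
    (hmul : ∀ g ∈ S, ∀ h ∈ S, ∀ τ ∈ Hdom d, ℓ (g * h) τ = ℓ g (actH d h τ) * ℓ h τ)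
    {w : SLC (d+1) → ℂ} (hw : ∀ g ∈ S, ∀ τ ∈ Hdom d, ℓ g τ = w g * exp (jtilde d g τ / n))
    {g h : SLC (d+1)} (hg : g ∈ S) (hh : h ∈ S) (hgh : g * h ∈ S) :
    w g * w h = w (g * h) * exp (sigmaZ d g h * (2 * Real.pi * I) / n) := by
  have hbase : baseTau d ∈ Hdom d := baseTau_mem_Hdom
  have hσ := jtilde_mul_sub_eq_sigmaZ (mem_SUd1_iff.mp (hS hg)) (mem_SUd1_iff.mp (hS hh)) hbase
  have hcocycle := hmul g hg h hh _ hbase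
  rw [hw _ hgh _ hbase, hw g hg _ (actH_mem_Hdom (mem_SUd1_iff.mp (hS hh)) hbase),
    hw h hh _ hbase, Matrix.SpecialLinearGroup.coe_mul,
    show jtilde d (↑g * ↑h) (baseTau d) = jtilde d g (actH d h (baseTau d))
      + jtilde d h (baseTau d) + sigmaZ d g h * (2 * Real.pi * I) by linear_combination hσ,
    add_div, add_div, exp_add, exp_add] at hcocycle
  have hne : exp (jtilde d g (actH d h (baseTau d)) / n) * exp (jtilde d h (baseTau d) / n) ≠ 0 :=
    mul_ne_zero (exp_ne_zero _) (exp_ne_zero _)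
  apply mul_right_cancel₀ hne
  linear_combination -hcocycle

lemma isMultiplierSystem_exp_jtilde_sub (hS : S ⊆ SUd1 d) (hn : 0 < n) (K : SLC (d+1) → ℚ)
    (hK : ∀ g ∈ S, ∀ h ∈ S, ∃ t : ℤ, (sigmaZ d g h : ℚ) - (K (g * h) - K g - K h) = n * t) :
    IsMultiplierSystem d S 1 n fun g τ => exp ((jtilde d g τ - 2 * Real.pi * I * K g) / n) := by
  have hn' : (n : ℂ) ≠ 0 := Nat.cast_ne_zero.mpr hn.ne'
  have hKC : ∀ g ∈ S, ∀ h ∈ S, ∃ t : ℤ,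
      (sigmaZ d g h : ℂ) - (K (g * h) - K g - K h : ℂ) = n * t := fun g hg h hh => by
    obtain ⟨t, ht⟩ := hK g hg h hh
    exact ⟨t, by exact_mod_cast congrArg (Rat.cast : ℚ → ℂ) ht⟩
  refine ⟨fun _ _ _ _ => exp_ne_zero _, fun g hg h hh τ hτ => ?_,
    ⟨fun g => exp (-(2 * Real.pi * I * K g)), fun g hg h hh => ?_, fun g hg τ hτ => ?_⟩,
    fun g hg => ?_⟩
  · obtain ⟨t, ht⟩ := hKC g hg h hh
    have hσ := jtilde_mul_sub_eq_sigmaZ (mem_SUd1_iff.mp (hS hg)) (mem_SUd1_iff.mp (hS hh)) hτ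
    rw [← exp_add, exp_eq_exp_iff_exists_int, Matrix.SpecialLinearGroup.coe_mul]
    refine ⟨t, ?_⟩
    field_simp
    linear_combination hσ + 2 * Real.pi * I * ht
  · obtain ⟨t, ht⟩ := hKC g hg h hh
    rw [← exp_add, exp_eq_exp_iff_exists_int]
    refine ⟨n * t - sigmaZ d g h, ?_⟩
    push_cast
    linear_combination 2 * Real.pi * I * ht
  · rw [← exp_nat_mul, mul_div_cancel₀ _ hn', sub_eq_neg_add, exp_add,
      exp_jtilde (mem_SUd1_iff.mp (hS hg)) hτ, pow_one]
  · exact ((continuousOn_jtilde (mem_SUd1_iff.mp (hS hg))).sub continuousOn_const).div_const _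
      |>.cexp

end MultiplierSystem

/-- A subgroup `Γ` of `SU(d,1)` carries a multiplier system of weight `1/n`
if and only if the restriction of the cocycle `σ` to `Γ` splits modulo `n`, i.e. iff there is
`κ : Γ → ℚ` with `σ(g,h) − (κ(gh) − κ(g) − κ(h)) ∈ nℤ` for all `g,h ∈ Γ`. -/
theorem statement8 (d : ℕ) (hd : 2 ≤ d) (Γ : Subgroup (SLC (d+1)))
    (hΓ : Γ ≤ SUd1 d) (n : ℕ) (hn : 0 < n) :
    (∃ ℓ : SLC (d+1) → (Fin d → ℂ) → ℂ,
        IsMultiplierSystem d (Γ : Set (SLC (d+1))) 1 n ℓ) ↔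
    (∃ κ : ↥Γ → ℚ, ∀ g h : ↥Γ, ∃ t : ℤ,
        ((sigmaZ d ((g : SLC (d+1)) : Matrix (Fin (d+1)) (Fin (d+1)) ℂ)
            ((h : SLC (d+1)) : Matrix (Fin (d+1)) (Fin (d+1)) ℂ) : ℚ))
          - (κ (g * h) - κ g - κ h) = (n : ℚ) * t) := by
  have : NeZero d := ⟨by omega⟩
  have hΓS : (Γ : Set (SLC (d+1))) ⊆ SUd1 d := hΓ
  constructor
  · rintro ⟨ℓ, hℓ⟩
    obtain ⟨w, hw⟩ := exists_eq_mul_exp_jtilde_div hΓS hn hℓ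
    obtain ⟨θ, hθ⟩ := exists_real_splitting_of_mul_eq (σ := fun g h : Γ => sigmaZ d g h) hn
      (w := fun g : Γ => w g) (fun g => (hw g g.2).1) fun g h =>
        mul_eq_mul_exp_sigmaZ hΓS hℓ.2.1 (fun g hg => (hw g hg).2) g.2 h.2 (Γ.mul_mem g.2 h.2)
    exact exists_rat_splitting_of_real hθ
  · rintro ⟨κ, hκ⟩
    classical
    refine ⟨_, isMultiplierSystem_exp_jtilde_sub hΓS hn
      (fun g => if hg : g ∈ Γ then κ ⟨g, hg⟩ else 0) fun g (hg : g ∈ Γ) h (hh : h ∈ Γ) => ?_⟩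
    rw [dif_pos (Γ.mul_mem hg hh), dif_pos hg, dif_pos hh]
    exact hκ ⟨g, hg⟩ ⟨h, hh⟩
end
end

section
/- Let I be a nonzero ideal of ℤ[ζ] with norm N(I) = |ℤ[ζ]/I|. If z and w both lie in the ideal 2I (the product of the ideal (2) with I), then (1/4)·Tr(z·w̄/√-3) is an integer divisible by N(I). -/
open Matrix Complex
open scoped ComplexOrder

noncomputable section

/-- The primitive cube root of unity `ζ = e^{2πi/3}`. -/
def zeta3 : ℂ := Complex.exp (2 * Real.pi * Complex.I / 3)

lemma zeta3_pow_three : zeta3 ^ 3 = 1 := by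
  rw [zeta3, ← Complex.exp_nat_mul]
  rw [show (3 : ℕ) * (2 * ↑Real.pi * Complex.I / 3) = 2 * ↑Real.pi * Complex.I by
    push_cast; ring]
  exact Complex.exp_two_pi_mul_I

lemma zeta3_ne_one : zeta3 ≠ 1 := by
  have him : zeta3.im = Real.sin (2 * Real.pi / 3) := by
    rw [zeta3, show 2 * (Real.pi : ℂ) * Complex.I / 3 = (2 * Real.pi / 3 : ℝ) * Complex.I by
      push_cast; ring]
    rw [Complex.exp_ofReal_mul_I_im]
  have hpos : 0 < Real.sin (2 * Real.pi / 3) := by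
    apply Real.sin_pos_of_pos_of_lt_pi
    · positivity
    · nlinarith [Real.pi_pos]
  intro h
  rw [h] at him
  simp only [Complex.one_im] at him
  linarith

lemma zeta3_quad : zeta3 ^ 2 + zeta3 + 1 = 0 := by
  have h : (zeta3 - 1) * (zeta3 ^ 2 + zeta3 + 1) = 0 := by
    have : (zeta3 - 1) * (zeta3 ^ 2 + zeta3 + 1) = zeta3 ^ 3 - 1 := by ring
    rw [this, zeta3_pow_three, sub_self]
  rcases mul_eq_zero.mp h with h1 | h2
  · exact absurd (sub_eq_zero.mp h1) zeta3_ne_one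
  · exact h2

lemma zeta3_conj : starRingEnd ℂ zeta3 = zeta3 ^ 2 := by
  have habs : ‖zeta3‖ = 1 := by
    rw [zeta3, show 2 * (Real.pi : ℂ) * Complex.I / 3 = (2 * Real.pi / 3 : ℝ) * Complex.I by
      push_cast; ring]
    exact Complex.norm_exp_ofReal_mul_I _
  have h1 : starRingEnd ℂ zeta3 * zeta3 = 1 := by
    rw [mul_comm, Complex.mul_conj, Complex.normSq_eq_norm_sq, habs]; norm_num
  have h2 : zeta3 ^ 2 * zeta3 = 1 := by
    rw [← pow_succ, zeta3_pow_three]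
  have hz : zeta3 ≠ 0 := by
    intro h
    rw [h] at habs; simp at habs
  exact mul_right_cancel₀ hz (h1.trans h2.symm)

/-- The ring of Eisenstein integers `ℤ[ζ]`, as a subring of `ℂ`. -/
def Eis : Subring ℂ := Subring.closure {zeta3}

lemma zeta3_mem_Eis : zeta3 ∈ Eis := Subring.subset_closure rfl

lemma Eis_conj_mem {x : ℂ} (hx : x ∈ Eis) : starRingEnd ℂ x ∈ Eis := by
  induction hx using Subring.closure_induction with
  | mem y hy =>
      rcases hy with rfl
      rw [zeta3_conj]
      exact pow_mem zeta3_mem_Eis 2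
  | zero => simpa using Eis.zero_mem
  | one => simpa using Eis.one_mem
  | add a b _ _ ha hb => rw [map_add]; exact Eis.add_mem ha hb
  | neg a _ ha => rw [map_neg]; exact Eis.neg_mem ha
  | mul a b _ _ ha hb => rw [_root_.map_mul]; exact Eis.mul_mem ha hb

/-- The square root `√-3 = 2ζ + 1` of `-3` in `ℤ[ζ]`. -/
def sqrt3 : ℂ := 2 * zeta3 + 1

lemma sqrt3_mem_Eis : sqrt3 ∈ Eis := by
  refine Eis.add_mem (Eis.mul_mem ?_ zeta3_mem_Eis) Eis.one_mem
  rw [show (2 : ℂ) = 1 + 1 by norm_num]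
  exact Eis.add_mem Eis.one_mem Eis.one_mem

lemma sqrt3_sq : sqrt3 * sqrt3 = -3 := by
  have h := zeta3_quad
  rw [sqrt3]; ring_nf; linear_combination 4 * h

/-! `ℤ[ζ]` is norm-Euclidean: rounding both coordinates of `c = s + tζ` leaves a remainder
`s' + t'ζ` with `|s'|, |t'| ≤ 1/2`, of norm `s'² - s't' + t'² ≤ 3/4 < 1`. So every ideal is
principal, `I = (x)`, and `z = 2xa`, `w = 2xb` give `z w̄ = 4 (x x̄) (a b̄)` with
`x x̄ = N(x) = N(I)`.
Finally `Tr(u/√-3) = b` for `u = a + bζ`, because `u - ū = b(ζ - ζ²) = b√-3`. -/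

open ComplexConjugate

theorem isPrincipalIdealRing_of_exists_sub_mul_lt {R : Type*} [CommRing R] (f : R → ℕ)
    (h : ∀ x y : R, y ≠ 0 → ∃ q, f (x - q * y) < f y) : IsPrincipalIdealRing R := by
  refine ⟨fun I => ?_⟩
  by_cases hI : I = ⊥
  · rw [hI]
    exact bot_isPrincipal
  obtain ⟨y₀, hy₀I, hy₀⟩ := Submodule.exists_mem_ne_zero_of_ne_bot hI
  let s : Set R := {y | y ∈ I ∧ y ≠ 0}
  let y := Function.argminOn f s ⟨y₀, hy₀I, hy₀⟩
  obtain ⟨hyI, hy⟩ : y ∈ s := Function.argminOn_mem f s _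
  refine ⟨y, le_antisymm (fun x hx => ?_) ((Ideal.span_singleton_le_iff_mem I).2 hyI)⟩
  obtain ⟨q, hq⟩ := h x y hy
  have hr : x - q * y = 0 := by
    by_contra hr
    exact Function.not_lt_argminOn f s ⟨I.sub_mem hx (I.mul_mem_left q hyI), hr⟩ hq
  exact Ideal.mem_span_singleton'.2 ⟨q, (sub_eq_zero.1 hr).symm⟩

lemma zeta3_re : zeta3.re = -1 / 2 := by
  have h : zeta3 + conj zeta3 = -1 := by
    rw [zeta3_conj]
    linear_combination zeta3_quad
  have := congrArg Complex.re h
  rw [Complex.add_re, Complex.conj_re] at this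
  norm_num at this
  linarith

lemma zeta3_im_sq : zeta3.im ^ 2 = 3 / 4 := by
  have h : zeta3 * conj zeta3 = 1 := by
    rw [zeta3_conj, ← pow_succ', zeta3_pow_three]
  rw [Complex.mul_conj, Complex.normSq_apply, zeta3_re] at h
  have := congrArg Complex.re h
  norm_num at this
  linarith

lemma zeta3_im_ne_zero : zeta3.im ≠ 0 := by
  intro h
  have := zeta3_im_sq
  rw [h] at this
  norm_num at this

lemma normSq_ofReal_add_mul_zeta3 (s t : ℝ) :
    normSq (s + t * zeta3) = s ^ 2 - s * t + t ^ 2 := by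
  rw [Complex.normSq_apply]
  simp only [Complex.add_re, Complex.add_im, Complex.mul_re, Complex.mul_im, Complex.ofReal_re,
    Complex.ofReal_im, zeta3_re]
  linear_combination t ^ 2 * zeta3_im_sq

lemma exists_eq_ofReal_add_mul_zeta3 (c : ℂ) : ∃ s t : ℝ, c = s + t * zeta3 := by
  refine ⟨c.re - c.im / zeta3.im * zeta3.re, c.im / zeta3.im, Complex.ext ?_ ?_⟩
  · simp
  · simp [zeta3_im_ne_zero]

lemma exists_mem_Eis_normSq_sub_lt_one (c : ℂ) : ∃ q ∈ Eis, normSq (c - q) < 1 := by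
  obtain ⟨s, t, rfl⟩ := exists_eq_ofReal_add_mul_zeta3 c
  refine ⟨round s + round t * zeta3,
    add_mem (intCast_mem Eis _) (mul_mem (intCast_mem Eis _) zeta3_mem_Eis), ?_⟩
  have hc : (s : ℂ) + t * zeta3 - (round s + round t * zeta3)
      = ((s - round s : ℝ) : ℂ) + ((t - round t : ℝ) : ℂ) * zeta3 := by
    push_cast
    ring
  rw [hc, normSq_ofReal_add_mul_zeta3]
  obtain ⟨hs₁, hs₂⟩ := abs_le.1 (abs_sub_round s)
  obtain ⟨ht₁, ht₂⟩ := abs_le.1 (abs_sub_round t)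
  nlinarith

lemma mem_Eis_iff {x : ℂ} : x ∈ Eis ↔ ∃ a b : ℤ, x = a + b * zeta3 := by
  refine ⟨fun hx => ?_, ?_⟩
  · induction hx using Subring.closure_induction with
    | mem y hy =>
      rcases hy with rfl
      exact ⟨0, 1, by simp⟩
    | zero => exact ⟨0, 0, by simp⟩
    | one => exact ⟨1, 0, by simp⟩
    | add _ _ _ _ hu hv =>
      obtain ⟨a, b, rfl⟩ := hu
      obtain ⟨c, d, rfl⟩ := hv
      exact ⟨a + c, b + d, by push_cast; ring⟩
    | neg _ _ hu =>
      obtain ⟨a, b, rfl⟩ := hu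
      exact ⟨-a, -b, by push_cast; ring⟩
    | mul _ _ _ _ hu hv =>
      obtain ⟨a, b, rfl⟩ := hu
      obtain ⟨c, d, rfl⟩ := hv
      exact ⟨a * c - b * d, a * d + b * c - b * d, by
        push_cast
        linear_combination (b : ℂ) * d * zeta3_quad⟩
  · rintro ⟨a, b, rfl⟩
    exact add_mem (intCast_mem Eis a) (mul_mem (intCast_mem Eis b) zeta3_mem_Eis)

lemma eq_zero_of_intCast_add_mul_zeta3_eq_zero {a b : ℤ} (h : (a : ℂ) + b * zeta3 = 0) :
    a = 0 ∧ b = 0 := by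
  have him := congrArg Complex.im h
  have hre := congrArg Complex.re h
  simp only [Complex.add_im, Complex.add_re, Complex.mul_im, Complex.mul_re, Complex.intCast_re,
    Complex.intCast_im, zeta3_re, Complex.zero_re, Complex.zero_im] at him hre
  have hb : (b : ℝ) = 0 := by simpa [zeta3_im_ne_zero] using him
  have ha : (a : ℝ) = 0 := by rw [hb] at hre; simpa using hre
  exact ⟨by exact_mod_cast ha, by exact_mod_cast hb⟩

namespace Eis

def zeta : ↥Eis := ⟨zeta3, zeta3_mem_Eis⟩

lemma exists_eq_intCast_add_mul_zeta (x : ↥Eis) : ∃ a b : ℤ, x = a + b * zeta := by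
  obtain ⟨a, b, h⟩ := mem_Eis_iff.1 x.2
  exact ⟨a, b, Subtype.ext (by simpa [zeta] using h)⟩

lemma zeta_sq : zeta ^ 2 = -1 - zeta :=
  Subtype.ext (by push_cast [zeta]; linear_combination zeta3_quad)

def basis : Module.Basis (Fin 2) ℤ ↥Eis :=
  .mk (v := ![1, zeta])
    (LinearIndependent.pair_iff.2 fun s t hst => by
      apply eq_zero_of_intCast_add_mul_zeta3_eq_zero
      simpa [zeta, zsmul_eq_mul] using congrArg ((↑) : ↥Eis → ℂ) hst)
    (fun x _ => by
      obtain ⟨a, b, rfl⟩ := exists_eq_intCast_add_mul_zeta x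
      have h : (a : ↥Eis) + b * zeta = a • ![1, zeta] 0 + b • ![1, zeta] 1 := by
        simp [zsmul_eq_mul]
      rw [h]
      exact add_mem (Submodule.smul_mem _ _ (Submodule.subset_span ⟨0, rfl⟩))
        (Submodule.smul_mem _ _ (Submodule.subset_span ⟨1, rfl⟩)))

lemma basis_zero : basis 0 = 1 := by simp [basis]

lemma basis_one : basis 1 = zeta := by simp [basis]

instance : Module.Free ℤ ↥Eis := .of_basis basis

instance : Module.Finite ℤ ↥Eis := .of_basis basis

lemma norm_intCast_add_mul_zeta (a b : ℤ) :
    Algebra.norm ℤ ((a : ↥Eis) + b * zeta) = a ^ 2 - a * b + b ^ 2 := by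
  have h₀ : ((a : ↥Eis) + b * zeta) * basis 0 = a • basis 0 + b • basis 1 := by
    simp [basis_zero, basis_one, zsmul_eq_mul]
  have h₁ : ((a : ↥Eis) + b * zeta) * basis 1 = (-b) • basis 0 + (a - b) • basis 1 := by
    simp only [basis_zero, basis_one, zsmul_eq_mul]
    push_cast
    linear_combination (b : ↥Eis) * zeta_sq
  rw [Algebra.norm_eq_matrix_det basis, Matrix.det_fin_two]
  simp only [Algebra.leftMulMatrix_eq_repr_mul, h₀, h₁, map_add, map_smul, basis.repr_self]
  simp
  ring

lemma normSq_coe_eq_natAbs_norm (x : ↥Eis) : normSq (x : ℂ) = (Algebra.norm ℤ x).natAbs := by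
  obtain ⟨a, b, rfl⟩ := exists_eq_intCast_add_mul_zeta x
  have h := normSq_ofReal_add_mul_zeta3 a b
  push_cast at h
  rw [norm_intCast_add_mul_zeta, Nat.cast_natAbs, abs_of_nonneg (by nlinarith)]
  push_cast [zeta]
  exact h

instance : IsPrincipalIdealRing ↥Eis :=
  isPrincipalIdealRing_of_exists_sub_mul_lt (fun x => (Algebra.norm ℤ x).natAbs) fun x y hy => by
    obtain ⟨q, hq, hlt⟩ := exists_mem_Eis_normSq_sub_lt_one (x / y)
    refine ⟨⟨q, hq⟩, ?_⟩
    have hy' : (y : ℂ) ≠ 0 := by simpa using hy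
    have h : normSq ((x - ⟨q, hq⟩ * y : ↥Eis) : ℂ) < normSq (y : ℂ) := by
      calc normSq ((x - ⟨q, hq⟩ * y : ↥Eis) : ℂ)
          = normSq (x / y - q) * normSq (y : ℂ) := by
            rw [← normSq_mul]
            congr 1
            push_cast
            field_simp
        _ < 1 * normSq (y : ℂ) := mul_lt_mul_of_pos_right hlt (normSq_pos.2 hy')
        _ = normSq (y : ℂ) := one_mul _
    rwa [normSq_coe_eq_natAbs_norm, normSq_coe_eq_natAbs_norm, Nat.cast_lt] at h

lemma card_quotient_span_singleton_eq_normSq (x : ↥Eis) :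
    (Nat.card (↥Eis ⧸ Ideal.span {x}) : ℝ) = normSq (x : ℂ) := by
  rw [← Submodule.cardQuot_apply, ← Ideal.absNorm_apply, Ideal.absNorm_span_singleton,
    normSq_coe_eq_natAbs_norm]

end Eis

lemma sqrt3_ne_zero : sqrt3 ≠ 0 := by
  intro h
  have := sqrt3_sq
  rw [h] at this
  norm_num at this

lemma exists_trace_div_sqrt3_eq_intCast {u : ℂ} (hu : u ∈ Eis) :
    ∃ q : ℤ, u / sqrt3 + conj (u / sqrt3) = q := by
  obtain ⟨a, b, rfl⟩ := mem_Eis_iff.1 hu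
  refine ⟨b, ?_⟩
  have hconj : conj sqrt3 = -sqrt3 := by
    simp only [sqrt3, map_add, map_mul, zeta3_conj, map_ofNat, map_one]
    linear_combination 2 * zeta3_quad
  have hsub : (a + b * zeta3 : ℂ) - conj (a + b * zeta3) = b * sqrt3 := by
    simp only [map_add, map_mul, map_intCast, zeta3_conj, sqrt3]
    linear_combination (-b : ℂ) * zeta3_quad
  rw [map_div₀, hconj, div_neg, ← sub_eq_add_neg, ← sub_div, hsub,
    mul_div_cancel_right₀ _ sqrt3_ne_zero]

theorem statement15_general (I : Ideal ↥Eis) (z w : ↥Eis)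
    (hz : z ∈ Ideal.span {(2 : ↥Eis)} * I) (hw : w ∈ Ideal.span {(2 : ↥Eis)} * I) :
    ∃ t : ℤ, (Nat.card (↥Eis ⧸ I) : ℤ) ∣ t ∧
      ((z : ℂ) * starRingEnd ℂ (w : ℂ) / sqrt3
          + starRingEnd ℂ ((z : ℂ) * starRingEnd ℂ (w : ℂ) / sqrt3)) / 4 = (t : ℂ) := by
  obtain ⟨x, rfl⟩ := (IsPrincipalIdealRing.principal I).principal
  rw [Ideal.submodule_span_eq, Ideal.span_singleton_mul_span_singleton,
    Ideal.mem_span_singleton'] at hz hw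
  obtain ⟨a, rfl⟩ := hz
  obtain ⟨b, rfl⟩ := hw
  set N := Nat.card (↥Eis ⧸ Ideal.span {x})
  obtain ⟨q, hq⟩ := exists_trace_div_sqrt3_eq_intCast (mul_mem a.2 (Eis_conj_mem b.2))
  refine ⟨N * q, dvd_mul_right _ _, ?_⟩
  have hzw : ((a * (2 * x) : ↥Eis) : ℂ) * conj ((b * (2 * x) : ↥Eis) : ℂ)
      = ((4 * N : ℝ) : ℂ) * (a * conj (b : ℂ)) := by
    have h2 : ((2 : ↥Eis) : ℂ) = 2 := rfl
    rw [Eis.card_quotient_span_singleton_eq_normSq]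
    push_cast [h2]
    rw [← mul_conj, map_mul, map_mul, map_ofNat]
    ring
  rw [hzw, mul_div_assoc, map_mul, Complex.conj_ofReal, ← mul_add, hq]
  push_cast
  ring

/-- If `I` is a nonzero ideal of `ℤ[ζ]` with norm `N(I) = |ℤ[ζ]/I|`, and
`z, w` both lie in the ideal `2I`, then `(1/4)·Tr(z·w̄/√-3)` is an integer divisible
by `N(I)`. -/
theorem statement15 (I : Ideal ↥Eis) (hI : I ≠ ⊥) (z w : ↥Eis)
    (hz : z ∈ Ideal.span {(2 : ↥Eis)} * I) (hw : w ∈ Ideal.span {(2 : ↥Eis)} * I) :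
    ∃ t : ℤ, (Nat.card (↥Eis ⧸ I) : ℤ) ∣ t ∧
      ((z : ℂ) * starRingEnd ℂ (w : ℂ) / sqrt3
          + starRingEnd ℂ ((z : ℂ) * starRingEnd ℂ (w : ℂ) / sqrt3)) / 4 = (t : ℂ) :=
  statement15_general I z w hz hw
end
end
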